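/- arXiv:2202.05889 — 7 statements merged into one kernel-verified Lean document; each statement's English description precedes it below -/
import Mathlib

section
/- A 2×2 real Markov matrix M is embeddable (i.e., there exists a 2×2 real matrix Q with nonnegative off-diagonal entries and rows summing to zero such that exp(Q) = M) if and only if det(M) > 0, equivalently trace(M) > 1. -/
/-!
If `M = exp Q`, then `M = exp (Q / 2) ^ 2`, so `det M` is the square of the determinant of an
invertible matrix and hence positive. Conversely, `N = M - 1` has zero row sums, so `det N = 0`
and Cayley–Hamilton gives `N * N = τ • N` with `τ = trace N = det M - 1 ∈ (-1, 0]`. For `τ ≠ 0`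
the matrix `τ⁻¹ • N` is idempotent, whence `exp (t • N) = 1 + ((exp (t * τ) - 1) / τ) • N`, and
`t = log (1 + τ) / τ ≥ 0` gives `exp (t • N) = M` with `t • N` a rate matrix.
-/

open Matrix

/-- A Markov matrix: nonnegative entries, rows summing to one. -/
def IsMarkov {n : ℕ} (M : Matrix (Fin n) (Fin n) ℝ) : Prop :=
  (∀ i j, 0 ≤ M i j) ∧ ∀ i, ∑ j, M i j = 1

/-- A rate matrix: nonnegative off-diagonal entries, rows summing to zero. -/
def IsRate {n : ℕ} (Q : Matrix (Fin n) (Fin n) ℝ) : Prop :=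
  (∀ i j, i ≠ j → 0 ≤ Q i j) ∧ ∀ i, ∑ j, Q i j = 0

open NormedSpace Real
open scoped Nat

section ExpOfQuadratic

variable {𝔸 : Type*} [NormedRing 𝔸] [NormedAlgebra ℝ 𝔸] [CompleteSpace 𝔸]

theorem IsIdempotentElem.exp_smul {P : 𝔸} (hP : IsIdempotentElem P) (c : ℝ) :
    exp (c • P) = 1 + (Real.exp c - 1) • P := by
  have hterm : ∀ n : ℕ, ((n ! : ℝ)⁻¹) • (c • P) ^ n =
      (c ^ n / n !) • P + Pi.single (M := fun _ => 𝔸) 0 (1 - P) n := by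
    rintro (_ | n)
    · simp
    · rw [smul_pow, hP.pow_succ_eq, smul_smul, Pi.single_eq_of_ne n.succ_ne_zero]
      simp [div_eq_inv_mul]
  have hsum := ((expSeries_div_hasSum_exp c).smul_const P).add (hasSum_pi_single 0 (1 - P))
  simp_rw [← hterm, ← Real.exp_eq_exp_ℝ] at hsum
  rw [(exp_series_hasSum_exp' (𝕂 := ℝ) (c • P)).unique hsum, sub_smul, one_smul]
  abel

theorem exp_smul_of_mul_self_eq_smul {N : 𝔸} {μ : ℝ} (hN : N * N = μ • N) (hμ : μ ≠ 0)
    (t : ℝ) : exp (t • N) = 1 + ((Real.exp (t * μ) - 1) / μ) • N := by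
  have hP : IsIdempotentElem (μ⁻¹ • N) := by
    rw [IsIdempotentElem, smul_mul_smul_comm, hN, smul_smul, mul_assoc, inv_mul_cancel₀ hμ, mul_one]
  rw [show t • N = (t * μ) • (μ⁻¹ • N) by rw [smul_smul, mul_assoc, mul_inv_cancel₀ hμ, mul_one],
    hP.exp_smul, smul_smul, div_eq_mul_inv]

theorem exp_smul_log_one_add_div_of_mul_self_eq_smul {N : 𝔸} {μ : ℝ} (hN : N * N = μ • N)
    (hμ : μ ≠ 0) (hμ1 : -1 < μ) : exp ((log (1 + μ) / μ) • N) = 1 + N := by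
  rw [exp_smul_of_mul_self_eq_smul hN hμ, div_mul_cancel₀ _ hμ, exp_log (by linarith),
    add_sub_cancel_left, div_self hμ, one_smul]

end ExpOfQuadratic

theorem Real.log_one_add_div_self_nonneg {x : ℝ} (hx : -1 < x) : 0 ≤ log (1 + x) / x := by
  rcases lt_trichotomy x 0 with hneg | rfl | hpos
  · exact div_nonneg_of_nonpos ((log_nonpos_iff (by linarith)).2 (by linarith)) hneg.le
  · simp
  · exact div_nonneg (log_nonneg (by linarith)) hpos.le

theorem Matrix.det_exp_pos {ι : Type*} [Fintype ι] [DecidableEq ι] (A : Matrix ι ι ℝ) :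
    0 < (exp A).det := by
  set B := (1 / 2 : ℝ) • A
  have hA : A = B + B := by rw [← add_smul]; norm_num
  have hB : (exp B).det ≠ 0 := ((isUnit_iff_isUnit_det (exp B)).1 (Matrix.isUnit_exp B)).ne_zero
  rw [hA, Matrix.exp_add_of_commute B B (Commute.refl B), det_mul]
  exact mul_self_pos.2 hB

namespace IsMarkov

theorem isRate_smul_sub_one {n : ℕ} {M : Matrix (Fin n) (Fin n) ℝ} (hM : IsMarkov M) {t : ℝ}
    (ht : 0 ≤ t) : IsRate (t • (M - 1)) := by
  refine ⟨fun i j hij => ?_, fun i => ?_⟩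
  · simpa [one_apply_ne hij] using mul_nonneg ht (hM.1 i j)
  · simp [← Finset.mul_sum, Finset.sum_sub_distrib, one_apply, hM.2 i]

variable {M : Matrix (Fin 2) (Fin 2) ℝ}

theorem eq_fin_two (hM : IsMarkov M) : M = !![1 - M 0 1, M 0 1; M 1 0, 1 - M 1 0] := by
  have h0 := hM.2 0
  have h1 := hM.2 1
  simp only [Fin.sum_univ_two] at h0 h1
  ext i j
  fin_cases i <;> fin_cases j <;> simp <;> linarith

theorem det_eq_trace_sub_one (hM : IsMarkov M) : M.det = M.trace - 1 := by
  rw [hM.eq_fin_two, det_fin_two_of, trace_fin_two_of]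
  ring

theorem sub_one_mul_self (hM : IsMarkov M) : (M - 1) * (M - 1) = (M - 1).trace • (M - 1) := by
  rw [hM.eq_fin_two]
  generalize M 0 1 = a, M 1 0 = b
  ext i j
  fin_cases i <;> fin_cases j <;> simp [mul_apply, Fin.sum_univ_two, trace_fin_two] <;> ring

theorem eq_one_of_trace_eq_two (hM : IsMarkov M) (h : M.trace = 2) : M = 1 := by
  have h01 := hM.1 0 1
  have h10 := hM.1 1 0
  rw [hM.eq_fin_two, trace_fin_two_of] at h
  rw [hM.eq_fin_two, one_fin_two, show M 0 1 = 0 by linarith, show M 1 0 = 0 by linarith]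
  norm_num

theorem exists_isRate_exp_eq_of_det_pos (hM : IsMarkov M) (hdet : 0 < M.det) :
    ∃ Q : Matrix (Fin 2) (Fin 2) ℝ, IsRate Q ∧ exp Q = M := by
  have htrace : (M - 1).trace = M.trace - 2 := by simp [trace_sub]
  have hτ : -1 < (M - 1).trace := by linarith [hM.det_eq_trace_sub_one]
  refine ⟨(log (1 + (M - 1).trace) / (M - 1).trace) • (M - 1),
    hM.isRate_smul_sub_one (log_one_add_div_self_nonneg hτ), ?_⟩
  rcases eq_or_ne (M - 1).trace 0 with h0 | h0
  · rw [hM.eq_one_of_trace_eq_two (by linarith), sub_self, smul_zero, NormedSpace.exp_zero]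
  · let : NormedRing (Matrix (Fin 2) (Fin 2) ℝ) := Matrix.linftyOpNormedRing
    let : NormedAlgebra ℝ (Matrix (Fin 2) (Fin 2) ℝ) := Matrix.linftyOpNormedAlgebra
    exact (exp_smul_log_one_add_div_of_mul_self_eq_smul hM.sub_one_mul_self h0 hτ).trans
      (add_sub_cancel 1 M)

end IsMarkov

/-- A 2×2 real Markov matrix is embeddable iff `det M > 0`, equivalently `trace M > 1`. -/
theorem embeddable_two_iff (M : Matrix (Fin 2) (Fin 2) ℝ) (hM : IsMarkov M) :
    ((∃ Q : Matrix (Fin 2) (Fin 2) ℝ, IsRate Q ∧ NormedSpace.exp Q = M) ↔ 0 < M.det)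
    ∧ (0 < M.det ↔ 1 < M.trace) := by
  refine ⟨⟨?_, hM.exists_isRate_exp_eq_of_det_pos⟩, by rw [hM.det_eq_trace_sub_one, sub_pos]⟩
  rintro ⟨Q, -, rfl⟩
  exact det_exp_pos Q
end

section
/- If Q is a rate matrix (real square matrix with nonnegative off-diagonal entries and rows summing to zero), then exp(Q) is a Markov matrix. -/
open Matrix

/-!
Rows of `exp Q` sum to one: with `J` the all-ones matrix, `Q * J = 0` kills every term of
`exp Q * J = ∑ Qᵏ J / k!` except `J` itself. Entries are nonnegative: for `c` large, `Q + c • 1` is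
entrywise nonnegative, hence so are its powers and its exponential, and
`exp Q = e⁻ᶜ • exp (Q + c • 1)`.
-/

open NormedSpace Nat

theorem NormedSpace.exp_mul_of_mul_eq_zero {𝔸 : Type*} [NormedRing 𝔸] [NormedAlgebra ℚ 𝔸]
    [CompleteSpace 𝔸] {a b : 𝔸} (h : a * b = 0) : exp a * b = b := by
  have hterm : (fun k : ℕ => ((k !⁻¹ : ℚ) • a ^ k) * b) = fun k => if k = 0 then b else 0 := by
    funext k
    rcases k with _ | k
    · simp
    · rw [smul_mul_assoc, pow_succ, mul_assoc, h]
      simp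
  have hsum := (exp_series_hasSum_exp' (𝕂 := ℚ) a).mul_right b
  rw [hterm] at hsum
  exact hsum.unique (hasSum_ite_eq 0 b)

namespace Matrix

variable {m : Type*} [Fintype m] [DecidableEq m]

theorem exp_mul_of_mul_eq_zero {A B : Matrix m m ℝ} (h : A * B = 0) : exp A * B = B := by
  open scoped Norms.Operator in exact NormedSpace.exp_mul_of_mul_eq_zero h

theorem sum_exp_apply_eq_one {A : Matrix m m ℝ} (hA : ∀ i, ∑ j, A i j = 0) (i : m) :
    ∑ j, exp A i j = 1 := by
  set J : Matrix m m ℝ := of fun _ _ => 1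
  have mul_J_apply (M : Matrix m m ℝ) : (M * J) i i = ∑ j, M i j := by
    simp [J, mul_apply]
  have hAJ : A * J = 0 := by
    ext k l
    simp [J, mul_apply, hA]
  rw [← mul_J_apply, exp_mul_of_mul_eq_zero hAJ]
  rfl

theorem exp_apply_nonneg {A : Matrix m m ℝ} (hA : ∀ i j, 0 ≤ A i j) (i j : m) :
    0 ≤ exp A i j := by
  have hsum : HasSum (fun k : ℕ => (k !⁻¹ : ℝ) • A ^ k) (exp A) := by
    open scoped Norms.Operator in exact exp_series_hasSum_exp' A
  exact (Pi.hasSum.mp (Pi.hasSum.mp hsum i) j).nonneg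
    fun k => mul_nonneg (by positivity) (pow_apply_nonneg hA k i j)

theorem exp_add_smul_one (A : Matrix m m ℝ) (c : ℝ) : exp (A + c • 1) = Real.exp c • exp A := by
  rw [exp_add_of_commute _ _ ((Commute.one_right A).smul_right c), smul_one_eq_diagonal,
    exp_diagonal, Pi.exp_def, ← Real.exp_eq_exp_ℝ, ← smul_one_eq_diagonal, mul_smul_comm, mul_one]

theorem exp_apply_nonneg_of_offDiag_nonneg {A : Matrix m m ℝ} (hA : ∀ i j, i ≠ j → 0 ≤ A i j)
    (i j : m) : 0 ≤ exp A i j := by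
  obtain ⟨c, hc⟩ := Finite.exists_le fun i => -A i i
  have hshift : ∀ i j, 0 ≤ (A + c • 1) i j := by
    intro i j
    rcases eq_or_ne i j with rfl | hij
    · simpa [neg_le_iff_add_nonneg'] using hc i
    · simpa [one_apply_ne hij] using hA i j hij
  have h := exp_apply_nonneg hshift i j
  rw [exp_add_smul_one, smul_apply, smul_eq_mul] at h
  exact nonneg_of_mul_nonneg_right h (Real.exp_pos c)

end Matrix

/-- The exponential of a rate matrix is a Markov matrix. -/
theorem isMarkov_exp_of_isRate {n : ℕ} (Q : Matrix (Fin n) (Fin n) ℝ) (hQ : IsRate Q) :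
    IsMarkov (NormedSpace.exp Q) :=
  ⟨exp_apply_nonneg_of_offDiag_nonneg hQ.1, sum_exp_apply_eq_one hQ.2⟩
end

section
/- With S the 4×4 matrix with rows (1,0,0,1),(0,1,1,0),(0,1,-1,0),(1,0,0,-1), and A=(a_{ij}), B=(b_{ij}) 2×2 real matrices, the matrix S·diag(A,B)·S⁻¹ is a Markov matrix if and only if A is a Markov matrix and |b22| ≤ a11, |b21| ≤ a12, |b12| ≤ a21, |b11| ≤ a22. -/
open Matrix

theorem abs_le_iff_add_nonneg_and_sub_nonneg {α : Type*} [AddCommGroup α] [LinearOrder α]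
    [IsOrderedAddMonoid α] {x y : α} : |y| ≤ x ↔ 0 ≤ x + y ∧ 0 ≤ x - y := by
  rw [abs_le, neg_le_iff_add_nonneg', sub_nonneg]

/-- The matrix `S`: it sends `v` to `(v₀ + v₃, v₁ + v₂, v₁ - v₂, v₀ - v₃)`. -/
def sumDiffMatrix : Matrix (Fin 4) (Fin 4) ℝ :=
  !![1, 0, 0, 1; 0, 1, 1, 0; 0, 1, -1, 0; 1, 0, 0, -1]

def diagBlocks (A B : Matrix (Fin 2) (Fin 2) ℝ) : Matrix (Fin 4) (Fin 4) ℝ :=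
  !![A 0 0, A 0 1, 0, 0;
     A 1 0, A 1 1, 0, 0;
     0, 0, B 0 0, B 0 1;
     0, 0, B 1 0, B 1 1]

theorem sumDiffMatrix_mul_self : sumDiffMatrix * sumDiffMatrix = (2 : ℝ) • 1 := by
  ext i j
  fin_cases i <;> fin_cases j <;> simp [sumDiffMatrix, mul_apply, Fin.sum_univ_four] <;> norm_num

theorem inv_sumDiffMatrix : sumDiffMatrix⁻¹ = (2 : ℝ)⁻¹ • sumDiffMatrix :=
  inv_eq_right_inv <| by rw [mul_smul_comm, sumDiffMatrix_mul_self, smul_smul]; norm_num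

theorem sumDiffMatrix_conj_diagBlocks (A B : Matrix (Fin 2) (Fin 2) ℝ) :
    sumDiffMatrix * diagBlocks A B * sumDiffMatrix⁻¹ = (2 : ℝ)⁻¹ •
      !![A 0 0 + B 1 1, A 0 1 + B 1 0, A 0 1 - B 1 0, A 0 0 - B 1 1;
         A 1 0 + B 0 1, A 1 1 + B 0 0, A 1 1 - B 0 0, A 1 0 - B 0 1;
         A 1 0 - B 0 1, A 1 1 - B 0 0, A 1 1 + B 0 0, A 1 0 + B 0 1;
         A 0 0 - B 1 1, A 0 1 - B 1 0, A 0 1 + B 1 0, A 0 0 + B 1 1] := by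
  rw [inv_sumDiffMatrix, mul_smul_comm]
  congr 1
  ext i j
  fin_cases i <;> fin_cases j <;>
    simp [sumDiffMatrix, diagBlocks, mul_apply, Fin.sum_univ_four] <;> ring

theorem sumDiffMatrix_conj_nonneg_iff (A B : Matrix (Fin 2) (Fin 2) ℝ) :
    (∀ i j, 0 ≤ (sumDiffMatrix * diagBlocks A B * sumDiffMatrix⁻¹) i j) ↔
      |B 1 1| ≤ A 0 0 ∧ |B 1 0| ≤ A 0 1 ∧ |B 0 1| ≤ A 1 0 ∧ |B 0 0| ≤ A 1 1 := by
  simp only [sumDiffMatrix_conj_diagBlocks, abs_le_iff_add_nonneg_and_sub_nonneg,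
    Fin.forall_fin_succ, IsEmpty.forall_iff, Matrix.smul_apply, smul_eq_mul,
    mul_nonneg_iff_of_pos_left (by norm_num : (0 : ℝ) < 2⁻¹), of_apply, cons_val',
    cons_val_zero, cons_val_succ, cons_val_fin_one, and_true]
  tauto

theorem sumDiffMatrix_conj_rowSum_eq_one_iff (A B : Matrix (Fin 2) (Fin 2) ℝ) :
    (∀ i, ∑ j, (sumDiffMatrix * diagBlocks A B * sumDiffMatrix⁻¹) i j = 1) ↔
      ∀ i, ∑ j, A i j = 1 := by
  simp only [sumDiffMatrix_conj_diagBlocks, Fin.forall_fin_succ, IsEmpty.forall_iff,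
    Matrix.smul_apply, smul_eq_mul, Fin.sum_univ_four, Fin.sum_univ_two, of_apply, cons_val',
    cons_val_zero, cons_val_succ, cons_val_fin_one, cons_val_one, cons_val, Fin.succ_zero_eq_one,
    and_true]
  constructor
  · rintro ⟨h₀, h₁, -, -⟩
    constructor <;> linarith
  · rintro ⟨h₀, h₁⟩
    refine ⟨?_, ?_, ?_, ?_⟩ <;> linarith

/-- `S · diag(A,B) · S⁻¹` is Markov iff `A` is Markov and `B` is entrywise dominated by `A`
(transposed about the center). -/
theorem blockDiagonal_conj_isMarkov_iff (A B : Matrix (Fin 2) (Fin 2) ℝ) :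
    let S : Matrix (Fin 4) (Fin 4) ℝ :=
      !![1, 0, 0, 1; 0, 1, 1, 0; 0, 1, -1, 0; 1, 0, 0, -1]
    let C : Matrix (Fin 4) (Fin 4) ℝ :=
      !![A 0 0, A 0 1, 0, 0;
         A 1 0, A 1 1, 0, 0;
         0, 0, B 0 0, B 0 1;
         0, 0, B 1 0, B 1 1]
    IsMarkov (S * C * S⁻¹) ↔
      (IsMarkov A ∧ |B 1 1| ≤ A 0 0 ∧ |B 1 0| ≤ A 0 1 ∧ |B 0 1| ≤ A 1 0 ∧
        |B 0 0| ≤ A 1 1) := by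
  show IsMarkov (sumDiffMatrix * diagBlocks A B * sumDiffMatrix⁻¹) ↔ _
  rw [IsMarkov, IsMarkov, sumDiffMatrix_conj_nonneg_iff, sumDiffMatrix_conj_rowSum_eq_one_iff]
  constructor
  · rintro ⟨hdom, hsum⟩
    have hA : ∀ i j, 0 ≤ A i j := by
      obtain ⟨h₀₀, h₀₁, h₁₀, h₁₁⟩ := hdom
      intro i j
      fin_cases i <;> fin_cases j
      exacts [(abs_nonneg _).trans h₀₀, (abs_nonneg _).trans h₀₁, (abs_nonneg _).trans h₁₀,
        (abs_nonneg _).trans h₁₁]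
    exact ⟨⟨hA, hsum⟩, hdom⟩
  · rintro ⟨⟨-, hsum⟩, hdom⟩
    exact ⟨hdom, hsum⟩
end

section
/- With S the 4×4 matrix with rows (1,0,0,1),(0,1,1,0),(0,1,-1,0),(1,0,0,-1), and A=(a_{ij}), B=(b_{ij}) 2×2 real matrices, the matrix S·diag(A,B)·S⁻¹ is a rate matrix if and only if A is a rate matrix and b22 ≤ a11, |b21| ≤ a12, |b12| ≤ a21, b11 ≤ a22. -/
open Matrix

set_option maxHeartbeats 1000000 in
/-- `S · diag(A,B) · S⁻¹` is a rate matrix iff `A` is a rate matrix and the stated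
entrywise inequalities hold. -/
theorem blockDiagonal_conj_isRate_iff (A B : Matrix (Fin 2) (Fin 2) ℝ) :
    let S : Matrix (Fin 4) (Fin 4) ℝ :=
      !![1, 0, 0, 1; 0, 1, 1, 0; 0, 1, -1, 0; 1, 0, 0, -1]
    let C : Matrix (Fin 4) (Fin 4) ℝ :=
      !![A 0 0, A 0 1, 0, 0;
         A 1 0, A 1 1, 0, 0;
         0, 0, B 0 0, B 0 1;
         0, 0, B 1 0, B 1 1]
    IsRate (S * C * S⁻¹) ↔
      (IsRate A ∧ B 1 1 ≤ A 0 0 ∧ |B 1 0| ≤ A 0 1 ∧ |B 0 1| ≤ A 1 0 ∧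
        B 0 0 ≤ A 1 1) := by
  intro S C
  have hSinv : S⁻¹ =
      !![(1:ℝ)/2, 0, 0, 1/2; 0, 1/2, 1/2, 0; 0, 1/2, -(1/2), 0; 1/2, 0, 0, -(1/2)] := by
    apply inv_eq_right_inv
    ext i j
    fin_cases i <;> fin_cases j <;>
      simp [S, Matrix.mul_apply, Fin.sum_univ_four] <;> norm_num
  have hM : S * C * S⁻¹ =
      !![(A 0 0 + B 1 1)/2, (A 0 1 + B 1 0)/2, (A 0 1 - B 1 0)/2, (A 0 0 - B 1 1)/2;
         (A 1 0 + B 0 1)/2, (A 1 1 + B 0 0)/2, (A 1 1 - B 0 0)/2, (A 1 0 - B 0 1)/2;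
         (A 1 0 - B 0 1)/2, (A 1 1 - B 0 0)/2, (A 1 1 + B 0 0)/2, (A 1 0 + B 0 1)/2;
         (A 0 0 - B 1 1)/2, (A 0 1 - B 1 0)/2, (A 0 1 + B 1 0)/2, (A 0 0 + B 1 1)/2] := by
    rw [hSinv]
    ext i j
    fin_cases i <;> fin_cases j <;>
      simp [S, C, Matrix.mul_apply, Fin.sum_univ_four] <;> ring
  rw [hM]
  constructor
  · rintro ⟨h1, h2⟩
    have e01 := h1 0 1 (by decide)
    have e02 := h1 0 2 (by decide)
    have e03 := h1 0 3 (by decide)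
    have e10 := h1 1 0 (by decide)
    have e12 := h1 1 2 (by decide)
    have e13 := h1 1 3 (by decide)
    have s0 := h2 0
    have s1 := h2 1
    simp [Fin.sum_univ_four] at e01 e02 e03 e10 e12 e13 s0 s1
    refine ⟨⟨?_, ?_⟩, by linarith, abs_le.2 ⟨by linarith, by linarith⟩,
      abs_le.2 ⟨by linarith, by linarith⟩, by linarith⟩
    · intro i j hij
      fin_cases i <;> fin_cases j <;> simp at hij ⊢ <;> linarith
    · intro i
      fin_cases i <;> simp [Fin.sum_univ_two] <;> linarith
  · rintro ⟨⟨hA1, hA2⟩, hb, hb21, hb12, hb'⟩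
    have s0 := hA2 0
    have s1 := hA2 1
    simp [Fin.sum_univ_two] at s0 s1
    have h21 := abs_le.1 hb21
    have h12 := abs_le.1 hb12
    constructor
    · intro i j hij
      fin_cases i <;> fin_cases j <;> simp at hij ⊢ <;> linarith [h21.1, h21.2, h12.1, h12.2]
    · intro i
      fin_cases i <;> simp [Fin.sum_univ_four] <;> linarith
end

section
/- Let M = (m_{ij}) be a 4×4 centrosymmetric Markov matrix such that M = exp(Q) for some 4×4 centrosymmetric rate matrix Q. Then (m22 - m23)(m11 - m14) > (m24 - m21)(m13 - m12). -/
open Matrix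

/-- Centrosymmetry: entrywise symmetry about the center of the matrix. -/
def IsCentrosymmetric {n : ℕ} (A : Matrix (Fin n) (Fin n) ℝ) : Prop :=
  ∀ i j, A i j = A i.rev j.rev

/-! Every centrosymmetric matrix preserves the `-1` eigenspace of the reversal `i ↦ i.rev`,
which is spanned by the last two columns of `S`, and acts on it by its lower block. The
exponential series respects such intertwinings, so `M₂ = exp Q₂`; and the determinant of a real
matrix exponential is positive, being the square of `det (exp (Q₂ / 2))`. -/

namespace Matrix

variable {m n 𝕂 : Type*} [Fintype m] [DecidableEq m] [Fintype n] [DecidableEq n]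

open scoped Nat Norms.Operator in
theorem exp_mul_eq_mul_exp_of_mul_eq [RCLike 𝕂] {A : Matrix m m 𝕂} {B : Matrix n n 𝕂}
    {P : Matrix m n 𝕂} (h : A * P = P * B) :
    NormedSpace.exp A * P = P * NormedSpace.exp B := by
  have hpow (k : ℕ) : A ^ k * P = P * B ^ k := by
    induction k with
    | zero => simp
    | succ k ih => rw [pow_succ, Matrix.mul_assoc, h, ← Matrix.mul_assoc, ih, Matrix.mul_assoc,
        ← pow_succ]
  have hA : HasSum (fun k => ((k ! : 𝕂)⁻¹ • A ^ k) * P) (NormedSpace.exp A * P) :=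
    (NormedSpace.exp_series_hasSum_exp' A).map (addMonoidHomMulRight P)
      (continuous_id.matrix_mul continuous_const)
  have hB : HasSum (fun k => P * ((k ! : 𝕂)⁻¹ • B ^ k)) (P * NormedSpace.exp B) :=
    (NormedSpace.exp_series_hasSum_exp' B).map (addMonoidHomMulLeft P)
      (continuous_const.matrix_mul continuous_id)
  simp only [Matrix.smul_mul, hpow] at hA
  simp only [Matrix.mul_smul] at hB
  exact hA.unique hB

theorem det_exp_pos_s12 (B : Matrix n n ℝ) : 0 < (NormedSpace.exp B).det := by
  have hsq : NormedSpace.exp B = NormedSpace.exp ((2⁻¹ : ℝ) • B) ^ 2 := by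
    rw [sq, ← Matrix.exp_add_of_commute _ _ (Commute.refl _), ← add_smul]
    norm_num
  have hunit : IsUnit (NormedSpace.exp ((2⁻¹ : ℝ) • B)).det :=
    (isUnit_iff_isUnit_det _).mp (Matrix.isUnit_exp _)
  rw [hsq, det_pow]
  exact pow_two_pos_of_ne_zero hunit.ne_zero

end Matrix

section Centrosymmetric

variable {R : Type*} [Ring R]

variable (R) in
/-- The last two columns of `S`. -/
def oddFrame : Matrix (Fin 4) (Fin 2) R :=
  !![0, 1; 1, 0; -1, 0; 0, -1]

/-- The lower-right `2 × 2` block of `S⁻¹ A S` when `A` is centrosymmetric. -/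
def lowerBlock (A : Matrix (Fin 4) (Fin 4) R) : Matrix (Fin 2) (Fin 2) R :=
  !![A 1 1 - A 1 2, A 1 0 - A 1 3; A 0 1 - A 0 2, A 0 0 - A 0 3]

theorem oddFrame_mul_left_cancel {n : Type*} {X Y : Matrix (Fin 2) n R}
    (h : oddFrame R * X = oddFrame R * Y) : X = Y := by
  ext i j
  fin_cases i
  · simpa [oddFrame, vecMul, dotProduct] using congrFun (congrFun h 1) j
  · simpa [oddFrame, vecMul, dotProduct] using congrFun (congrFun h 0) j

theorem IsCentrosymmetric.mul_oddFrame {A : Matrix (Fin 4) (Fin 4) ℝ}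
    (hA : IsCentrosymmetric A) : A * oddFrame ℝ = oddFrame ℝ * lowerBlock A := by
  ext i j
  fin_cases i <;> fin_cases j <;>
    simp [oddFrame, lowerBlock, mul_apply, Fin.sum_univ_four, hA 2, hA 3, sub_eq_add_neg]

end Centrosymmetric

theorem det_lower_block_pos_general
    (m11 m12 m13 m14 m21 m22 m23 m24 : ℝ)
    (M : Matrix (Fin 4) (Fin 4) ℝ)
    (hMdef : M = !![m11, m12, m13, m14; m21, m22, m23, m24;
                    m24, m23, m22, m21; m14, m13, m12, m11])
    (Q : Matrix (Fin 4) (Fin 4) ℝ)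
    (hQcs : IsCentrosymmetric Q)
    (hexp : NormedSpace.exp Q = M) :
    (m24 - m21) * (m13 - m12) < (m22 - m23) * (m11 - m14) := by
  have hMcs : IsCentrosymmetric M := by
    subst hMdef
    intro i j
    fin_cases i <;> fin_cases j <;> rfl
  have hblock : lowerBlock M = NormedSpace.exp (lowerBlock Q) := by
    apply oddFrame_mul_left_cancel
    rw [← hMcs.mul_oddFrame, ← hexp]
    exact exp_mul_eq_mul_exp_of_mul_eq hQcs.mul_oddFrame
  have hdet : 0 < (lowerBlock M).det := hblock ▸ det_exp_pos_s12 _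
  simp only [det_fin_two, lowerBlock, hMdef, of_apply, cons_val', cons_val_zero, cons_val_one,
    cons_val_fin_one, cons_val] at hdet
  linarith

/-- A 4×4 centrosymmetric Markov matrix with a centrosymmetric Markov generator satisfies
`(m22 - m23)(m11 - m14) > (m24 - m21)(m13 - m12)`. -/
theorem det_lower_block_pos
    (m11 m12 m13 m14 m21 m22 m23 m24 : ℝ)
    (M : Matrix (Fin 4) (Fin 4) ℝ)
    (hMdef : M = !![m11, m12, m13, m14; m21, m22, m23, m24;
                    m24, m23, m22, m21; m14, m13, m12, m11])
    (hM : IsMarkov M)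
    (Q : Matrix (Fin 4) (Fin 4) ℝ)
    (hQcs : IsCentrosymmetric Q) (hQ : IsRate Q)
    (hexp : NormedSpace.exp Q = M) :
    (m24 - m21) * (m13 - m12) < (m22 - m23) * (m11 - m14) :=
  det_lower_block_pos_general m11 m12 m13 m14 m21 m22 m23 m24 M hMdef Q hQcs hexp
end

section
/- Let M1 = [[λ, 1-λ],[1-μ, μ]] be a 2×2 Markov matrix with λ + μ ≠ 2. A 2×2 complex matrix of the form P1·diag(2πk₁i, log(λ+μ-1) + 2πk₂i)·P1⁻¹, where P1 = [[1, 1-λ],[1, μ-1]] and k₁, k₂ ∈ ℤ (this requires λ+μ-1 > 0 when k₂ is such that log is defined; in general use any branch), is a real matrix if and only if k₁ = k₂ = 0 and λ + μ > 1. In that case it equals (1/(2-λ-μ))·[[q·p, -q·p],[-r·p, r·p]] with p = log(λ+μ-1), q = 1-λ, r = 1-μ. -/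
/-!
`P1` diagonalises `M1`, so `P1 * diag(a, b) * P1⁻¹ = a • E + b • F`, where `E` and `F` are
the real spectral projections of `M1` for the eigenvalues `1` and `λ + μ - 1` (every row of `E`
is the stationary distribution). Since `E` and `F` are linearly independent over `ℝ`, the matrix
is real iff `a` and `b` are. For `b = log(λ + μ - 1) + 2πk₂i` this says
`arg(λ + μ - 1) + 2πk₂ = 0`, which forces `k₂ = 0` and `λ + μ - 1 > 0` because the argument
lies in `(-π, π]`.
-/

open Matrix Real

theorem Complex.arg_add_two_pi_mul_intCast_eq_zero_iff (z : ℂ) (k : ℤ) :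
    arg z + 2 * π * k = 0 ↔ arg z = 0 ∧ k = 0 := by
  refine ⟨fun h ↦ ?_, fun ⟨hz, hk⟩ ↦ by simp [hz, hk]⟩
  have hk_lt : (k : ℝ) < 1 := by nlinarith [pi_pos, neg_pi_lt_arg z]
  have hk_gt : (-1 : ℝ) < k := by nlinarith [pi_pos, arg_le_pi z]
  obtain rfl : k = 0 := by
    have : k < 1 := by exact_mod_cast hk_lt
    have : -1 < k := by exact_mod_cast hk_gt
    omega
  simpa using h

namespace TwoState

variable (lam mu : ℝ)

def eigenvectorMatrix : Matrix (Fin 2) (Fin 2) ℂ :=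
  !![1, 1 - (lam : ℂ); 1, (mu : ℂ) - 1]

noncomputable def stationaryProj : Matrix (Fin 2) (Fin 2) ℝ :=
  (2 - lam - mu)⁻¹ • !![1 - mu, 1 - lam; 1 - mu, 1 - lam]

noncomputable def transientProj : Matrix (Fin 2) (Fin 2) ℝ :=
  (2 - lam - mu)⁻¹ • !![1 - lam, -(1 - lam); -(1 - mu), 1 - mu]

variable {lam mu}

lemma inv_eigenvectorMatrix (h2 : lam + mu ≠ 2) :
    (eigenvectorMatrix lam mu)⁻¹ =
      (2 - (lam : ℂ) - mu)⁻¹ • !![1 - (mu : ℂ), 1 - (lam : ℂ); 1, -1] := by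
  have hs : (2 : ℂ) - lam - mu ≠ 0 := by
    exact_mod_cast fun h ↦ h2 (by linarith)
  apply Matrix.inv_eq_right_inv
  rw [eigenvectorMatrix]
  ext i j
  fin_cases i <;> fin_cases j <;> simp [Matrix.mul_apply, Fin.sum_univ_succ] <;> field_simp <;> ring

lemma conj_diagonal_eq (h2 : lam + mu ≠ 2) (a b : ℂ) :
    eigenvectorMatrix lam mu * !![a, 0; 0, b] * (eigenvectorMatrix lam mu)⁻¹ =
      a • (stationaryProj lam mu).map Complex.ofReal +
        b • (transientProj lam mu).map Complex.ofReal := by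
  rw [inv_eigenvectorMatrix h2, eigenvectorMatrix]
  ext i j
  fin_cases i <;> fin_cases j <;>
    simp [stationaryProj, transientProj, Matrix.mul_apply, Fin.sum_univ_succ] <;> ring

lemma smul_add_smul_eq_zero_iff (h2 : lam + mu ≠ 2) (α β : ℝ) :
    α • stationaryProj lam mu + β • transientProj lam mu = 0 ↔ α = 0 ∧ β = 0 := by
  refine ⟨fun h ↦ ?_, fun ⟨hα, hβ⟩ ↦ by simp [hα, hβ]⟩
  have hs : 2 - lam - mu ≠ 0 := fun h ↦ h2 (by linarith)
  set X := α • stationaryProj lam mu + β • transientProj lam mu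
  -- rows of `stationaryProj` sum to 1 and its columns are constant; rows of `transientProj`
  -- sum to 0 and the entries of its first column differ by 1
  have entries : X 0 0 + X 0 1 = α ∧ X 0 0 - X 1 0 = β := by
    simp only [X, stationaryProj, transientProj, Matrix.add_apply, Matrix.smul_apply, smul_eq_mul,
      of_apply, cons_val', cons_val_zero, cons_val_one, cons_val_fin_one]
    constructor <;> field_simp <;> ring
  simpa [h, eq_comm] using entries

lemma forall_im_eq_zero_iff (h2 : lam + mu ≠ 2) (a b : ℂ) :
    (∀ i j, ((a • (stationaryProj lam mu).map Complex.ofReal +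
      b • (transientProj lam mu).map Complex.ofReal) i j).im = 0) ↔ a.im = 0 ∧ b.im = 0 := by
  rw [← smul_add_smul_eq_zero_iff h2, ← Matrix.ext_iff]
  simp

end TwoState

theorem upper_block_real_logarithm_general (lam mu : ℝ)
    (h2 : lam + mu ≠ 2) (h1 : lam + mu ≠ 1) (k₁ k₂ : ℤ) :
    let P1 : Matrix (Fin 2) (Fin 2) ℂ := !![1, 1 - (lam : ℂ); 1, (mu : ℂ) - 1]
    let L : Matrix (Fin 2) (Fin 2) ℂ :=
      P1 * !![2 * Real.pi * k₁ * Complex.I, 0;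
              0, Complex.log ((lam : ℂ) + mu - 1) + 2 * Real.pi * k₂ * Complex.I] * P1⁻¹
    ((∀ i j, (L i j).im = 0) ↔ (k₁ = 0 ∧ k₂ = 0 ∧ 1 < lam + mu)) ∧
    ((k₁ = 0 ∧ k₂ = 0 ∧ 1 < lam + mu) →
      L = ((1 / (2 - lam - mu)) •
        !![(1 - lam) * Real.log (lam + mu - 1), -((1 - lam) * Real.log (lam + mu - 1));
           -((1 - mu) * Real.log (lam + mu - 1)), (1 - mu) * Real.log (lam + mu - 1)]).map
          Complex.ofReal) := by
  intro P1 L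
  have hL : L = _ := TwoState.conj_diagonal_eq h2 _ _
  have hcast : (lam : ℂ) + mu - 1 = ((lam + mu - 1 : ℝ) : ℂ) := by push_cast; ring
  have hpos : 0 ≤ lam + mu - 1 ↔ 1 < lam + mu :=
    ⟨fun h ↦ lt_of_le_of_ne (by linarith) (Ne.symm h1), fun h ↦ by linarith⟩
  refine ⟨?_, ?_⟩
  · rw [hL, TwoState.forall_im_eq_zero_iff h2]
    have him₁ : (2 * π * k₁ * Complex.I).im = 0 ↔ k₁ = 0 := by simp [pi_ne_zero]
    have him₂ : (Complex.log ((lam : ℂ) + mu - 1) + 2 * π * k₂ * Complex.I).im =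
        Complex.arg (lam + mu - 1 : ℝ) + 2 * π * k₂ := by
      rw [Complex.add_im, Complex.log_im, hcast]
      simp
    rw [him₁, him₂, Complex.arg_add_two_pi_mul_intCast_eq_zero_iff,
      Complex.arg_eq_zero_iff_zero_le, Complex.zero_le_real, hpos]
    tauto
  · rintro ⟨rfl, rfl, hlt⟩
    rw [hL, hcast, ← Complex.ofReal_log (by linarith)]
    ext i j
    fin_cases i <;> fin_cases j <;>
      simp [TwoState.stationaryProj, TwoState.transientProj] <;> ring

/-- For the 2×2 Markov matrix `M1 = [[λ, 1-λ],[1-μ, μ]]` with `λ + μ ≠ 2` (and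
`λ + μ ≠ 1` so that the logarithm branches are defined), the candidate logarithm
`P1·diag(2πk₁i, log(λ+μ-1) + 2πk₂i)·P1⁻¹` is real iff `k₁ = k₂ = 0` and `λ + μ > 1`,
in which case it equals the principal logarithm
`(1/(2-λ-μ))·[[q·p, -q·p],[-r·p, r·p]]` with `p = log(λ+μ-1)`, `q = 1-λ`, `r = 1-μ`. -/
theorem upper_block_real_logarithm (lam mu : ℝ)
    (hM : IsMarkov !![lam, 1 - lam; 1 - mu, mu])
    (h2 : lam + mu ≠ 2) (h1 : lam + mu ≠ 1) (k₁ k₂ : ℤ) :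
    let P1 : Matrix (Fin 2) (Fin 2) ℂ := !![1, 1 - (lam : ℂ); 1, (mu : ℂ) - 1]
    let L : Matrix (Fin 2) (Fin 2) ℂ :=
      P1 * !![2 * Real.pi * k₁ * Complex.I, 0;
              0, Complex.log ((lam : ℂ) + mu - 1) + 2 * Real.pi * k₂ * Complex.I] * P1⁻¹
    ((∀ i j, (L i j).im = 0) ↔ (k₁ = 0 ∧ k₂ = 0 ∧ 1 < lam + mu)) ∧
    ((k₁ = 0 ∧ k₂ = 0 ∧ 1 < lam + mu) →
      L = ((1 / (2 - lam - mu)) •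
        !![(1 - lam) * Real.log (lam + mu - 1), -((1 - lam) * Real.log (lam + mu - 1));
           -((1 - mu) * Real.log (lam + mu - 1)), (1 - mu) * Real.log (lam + mu - 1)]).map
          Complex.ofReal) :=
  upper_block_real_logarithm_general lam mu h2 h1 k₁ k₂
end

section
/- A real n×n centrosymmetric matrix A has a real centrosymmetric logarithm if and only if both blocks A1 and A2 in the block-diagonalization S_n⁻¹ A S_n = diag(A1, A2) admit real logarithms. -/
/-!
Write `S = fourierMatrix n`, `J = exchangeMatrix n` and `D` for the diagonal sign matrix that is
`1` on the first `⌈n/2⌉` indices and `-1` on the others. The matrix `S` is invertible, `S²` being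
diagonal with entries `1` and `2`, and `J S = S D`. So conjugation by `S` maps the centrosymmetric
matrices (`J Q J = Q`) bijectively onto the matrices with `D G D = G`, which are exactly the
block-diagonal matrices `diag(X, Y)`. Since `exp` commutes with conjugation, with reindexing and
with forming block-diagonal matrices, a centrosymmetric logarithm `Q` of `A` corresponds to a
pair of logarithms `X` of `A1` and `Y` of `A2`.
-/

open Matrix

/-- The n×n exchange (anti-diagonal) matrix. -/
def exchangeMatrix (n : ℕ) : Matrix (Fin n) (Fin n) ℝ :=
  Matrix.of fun i j => if j = i.rev then 1 else 0

/-- The generalized Fourier matrix `S_n`: for the upper rows it has 1 at positions `i`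
and `rev i`, the middle row (odd `n`) has a single 1, and the lower rows have 1 at
position `rev i` and -1 at position `i`. -/
def fourierMatrix (n : ℕ) : Matrix (Fin n) (Fin n) ℝ :=
  Matrix.of fun i j =>
    if 2 * i.val + 1 < n then (if j = i ∨ j = i.rev then 1 else 0)
    else if 2 * i.val + 1 = n then (if j = i then 1 else 0)
    else (if j = i.rev then 1 else if j = i then -1 else 0)

open NormedSpace

theorem SemiconjBy.units_conj_mul_mul_eq_self_iff {M : Type*} [Monoid M] {u : Mˣ} {d j q : M}
    (h : SemiconjBy (u : M) d j) :
    d * (↑u⁻¹ * q * u) * d = ↑u⁻¹ * q * u ↔ j * q * j = q := by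
  have hd : d = ↑u⁻¹ * j * u := by rw [mul_assoc, ← h.eq, Units.inv_mul_cancel_left]
  have hconj : d * (↑u⁻¹ * q * u) * d = ↑u⁻¹ * (j * q * j) * u := by
    simp only [hd, mul_assoc, Units.mul_inv_cancel_left]
  rw [hconj, Units.mul_left_inj, Units.mul_right_inj]

namespace Matrix

variable {m p ι R : Type*} [Fintype m] [DecidableEq m] [Fintype p] [DecidableEq p] [Fintype ι]

theorem fromBlocks_one_neg_one_conj_eq_self_iff [Ring R] [IsAddTorsionFree R]
    (M : Matrix (m ⊕ p) (m ⊕ p) R) :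
    fromBlocks 1 0 0 (-1) * M * fromBlocks 1 0 0 (-1) = M ↔
      M = fromBlocks M.toBlocks₁₁ 0 0 M.toBlocks₂₂ := by
  obtain ⟨A, B, C, D, rfl⟩ : ∃ A B C D, M = fromBlocks A B C D :=
    ⟨_, _, _, _, (fromBlocks_toBlocks M).symm⟩
  simp [fromBlocks_multiply, ← ext_iff, neg_eq_self]

theorem conj_eq_self_iff_of_submatrix_eq_fromBlocks [Ring R] [IsAddTorsionFree R]
    (e : m ⊕ p ≃ ι) {D : Matrix ι ι R} (hD : D.submatrix e e = fromBlocks 1 0 0 (-1))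
    (G : Matrix ι ι R) :
    D * G * D = G ↔
      G.submatrix e e = fromBlocks (G.submatrix e e).toBlocks₁₁ 0 0 (G.submatrix e e).toBlocks₂₂ := by
  rw [← fromBlocks_one_neg_one_conj_eq_self_iff, ← hD, submatrix_mul_equiv, submatrix_mul_equiv]
  exact (reindex e.symm e.symm).injective.eq_iff.symm

theorem exp_submatrix_equiv [DecidableEq ι] {𝕜 : Type*} [RCLike 𝕜] (e : m ≃ ι)
    (M : Matrix ι ι 𝕜) : exp (M.submatrix e e) = (exp M).submatrix e e := by
  open scoped Norms.Operator in
  exact (map_exp (reindexAlgEquiv ℚ 𝕜 e.symm) (continuous_id.matrix_reindex _ _) M).symm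

theorem exp_fromBlocks_zero_zero (X : Matrix m m ℝ) (Y : Matrix p p ℝ) :
    exp (fromBlocks X 0 0 Y) = fromBlocks (exp X) 0 0 (exp Y) := by
  let f : Matrix m m ℝ × Matrix p p ℝ →+* Matrix (m ⊕ p) (m ⊕ p) ℝ :=
    { toFun Z := fromBlocks Z.1 0 0 Z.2
      map_one' := fromBlocks_one
      map_mul' Z W := by simp [fromBlocks_multiply]
      map_zero' := fromBlocks_zero
      map_add' Z W := by simp [fromBlocks_add] }
  have hf : Continuous f :=
    continuous_fst.matrix_fromBlocks continuous_const continuous_const continuous_snd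
  open scoped Norms.Operator in
  calc exp (fromBlocks X 0 0 Y) = exp (f (X, Y)) := rfl
    _ = f (exp (X, Y)) := (map_exp f hf (X, Y)).symm
    _ = fromBlocks (exp X) 0 0 (exp Y) := by
      change fromBlocks (exp (X, Y)).1 0 0 (exp (X, Y)).2 = _
      congr 1
      · exact Prod.fst_exp (X, Y)
      · exact Prod.snd_exp (X, Y)

theorem exp_submatrix_of_submatrix_eq_fromBlocks [DecidableEq ι] (e : m ⊕ p ≃ ι)
    {G : Matrix ι ι ℝ} {X : Matrix m m ℝ} {Y : Matrix p p ℝ}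
    (hG : G.submatrix e e = fromBlocks X 0 0 Y) :
    (exp G).submatrix e e = fromBlocks (exp X) 0 0 (exp Y) := by
  rw [← exp_submatrix_equiv, hG, exp_fromBlocks_zero_zero]

end Matrix

section Fourier

variable (n : ℕ)

def blockSplit : Fin ((n + 1) / 2) ⊕ Fin (n - (n + 1) / 2) ≃ Fin n :=
  finSumFinEquiv.trans (finCongr (by omega))

@[simp] theorem blockSplit_inl_val (i : Fin ((n + 1) / 2)) :
    (blockSplit n (.inl i) : ℕ) = i := rfl

@[simp] theorem blockSplit_inr_val (i : Fin (n - (n + 1) / 2)) :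
    (blockSplit n (.inr i) : ℕ) = (n + 1) / 2 + i := rfl

def signMatrix : Matrix (Fin n) (Fin n) ℝ :=
  diagonal fun i => if (i : ℕ) < (n + 1) / 2 then 1 else -1

theorem signMatrix_submatrix_blockSplit :
    (signMatrix n).submatrix (blockSplit n) (blockSplit n) = fromBlocks 1 0 0 (-1) := by
  ext (i | i) (j | j) <;> by_cases h : (i : ℕ) = j <;>
    simp [signMatrix, diagonal_apply, one_apply, Fin.ext_iff, h]

variable {n}

theorem exchangeMatrix_mul_apply (M : Matrix (Fin n) (Fin n) ℝ) (i j : Fin n) :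
    (exchangeMatrix n * M) i j = M i.rev j := by
  simp [mul_apply, exchangeMatrix, ite_mul]

theorem fourierMatrix_mul_apply (M : Matrix (Fin n) (Fin n) ℝ) (i j : Fin n) :
    (fourierMatrix n * M) i j =
      (if n < 2 * i + 1 then -1 else 1) * M i j + (if 2 * i + 1 = n then 0 else 1) * M i.rev j := by
  have hrow : ∀ l, fourierMatrix n i l =
      (if l = i then (if n < 2 * i + 1 then -1 else 1) else 0) +
        (if l = i.rev then (if 2 * i + 1 = n then 0 else 1) else 0) := by
    intro l
    have := i.isLt
    simp only [fourierMatrix, of_apply, Fin.ext_iff, Fin.val_rev]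
    split_ifs <;> first | omega | norm_num
  simp [mul_apply, hrow, add_mul, ite_mul, Finset.sum_add_distrib]

variable (n)

theorem fourierMatrix_mul_self :
    fourierMatrix n * fourierMatrix n =
      diagonal fun i : Fin n => if 2 * (i : ℕ) + 1 = n then 1 else 2 := by
  ext i j
  have := i.isLt
  rw [fourierMatrix_mul_apply]
  simp only [fourierMatrix, diagonal_apply, of_apply, Fin.ext_iff, Fin.val_rev]
  split_ifs <;> first | omega | norm_num

theorem isUnit_fourierMatrix : IsUnit (fourierMatrix n) := by
  have h : IsUnit (fourierMatrix n * fourierMatrix n) := by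
    rw [fourierMatrix_mul_self, isUnit_diagonal, Pi.isUnit_iff]
    intro i
    split_ifs <;> norm_num
  rw [isUnit_iff_isUnit_det, det_mul] at h
  rw [isUnit_iff_isUnit_det]
  exact isUnit_of_mul_isUnit_left h

theorem fourierMatrix_semiconjBy :
    SemiconjBy (fourierMatrix n) (signMatrix n) (exchangeMatrix n) := by
  ext i j
  have := i.isLt
  have := j.isLt
  rw [exchangeMatrix_mul_apply, signMatrix, mul_diagonal]
  simp only [fourierMatrix, of_apply, Fin.ext_iff, Fin.val_rev]
  split_ifs <;> first | omega | norm_num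

theorem exchangeMatrix_conj_eq_self_iff (Q : Matrix (Fin n) (Fin n) ℝ) :
    exchangeMatrix n * Q * exchangeMatrix n = Q ↔
      ((fourierMatrix n)⁻¹ * Q * fourierMatrix n).submatrix (blockSplit n) (blockSplit n) =
        fromBlocks
          (((fourierMatrix n)⁻¹ * Q * fourierMatrix n).submatrix
            (blockSplit n) (blockSplit n)).toBlocks₁₁ 0 0
          (((fourierMatrix n)⁻¹ * Q * fourierMatrix n).submatrix
            (blockSplit n) (blockSplit n)).toBlocks₂₂ := by
  obtain ⟨u, hu⟩ := isUnit_fourierMatrix n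
  have hSJ : SemiconjBy (u : Matrix (Fin n) (Fin n) ℝ) (signMatrix n) (exchangeMatrix n) :=
    hu ▸ fourierMatrix_semiconjBy n
  rw [← conj_eq_self_iff_of_submatrix_eq_fromBlocks _ (signMatrix_submatrix_blockSplit n), ← hu,
    ← coe_units_inv, hSJ.units_conj_mul_mul_eq_self_iff]

end Fourier

/-- A centrosymmetric real matrix `A` has a real centrosymmetric logarithm iff both
diagonal blocks `A1` (of size `⌈n/2⌉`) and `A2` (of size `⌊n/2⌋`) of
`S_n⁻¹ A S_n` admit real logarithms. -/
theorem centrosymmetric_log_iff_blocks_log {n : ℕ} (A : Matrix (Fin n) (Fin n) ℝ)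
    (hA : exchangeMatrix n * A * exchangeMatrix n = A) :
    let k := (n + 1) / 2
    let F := (fourierMatrix n)⁻¹ * A * fourierMatrix n
    let A1 : Matrix (Fin k) (Fin k) ℝ :=
      F.submatrix (Fin.castLE (by omega)) (Fin.castLE (by omega))
    let A2 : Matrix (Fin (n - k)) (Fin (n - k)) ℝ :=
      F.submatrix (fun i => (⟨k + i.val, by have := i.isLt; omega⟩ : Fin n))
                  (fun i => (⟨k + i.val, by have := i.isLt; omega⟩ : Fin n))
    (∃ Q : Matrix (Fin n) (Fin n) ℝ,
        exchangeMatrix n * Q * exchangeMatrix n = Q ∧ NormedSpace.exp Q = A) ↔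
      ((∃ L1 : Matrix (Fin k) (Fin k) ℝ, NormedSpace.exp L1 = A1) ∧
       (∃ L2 : Matrix (Fin (n - k)) (Fin (n - k)) ℝ, NormedSpace.exp L2 = A2)) := by
  intro k F A1 A2
  set S := fourierMatrix n
  have hS : IsUnit S := isUnit_fourierMatrix n
  have : Invertible S := hS.invertible
  set e := blockSplit n
  have hFe : F.submatrix e e = fromBlocks A1 0 0 A2 := (exchangeMatrix_conj_eq_self_iff n A).mp hA
  constructor
  · rintro ⟨Q, hQ, hexpQ⟩
    obtain ⟨X, Y, hGe⟩ : ∃ X Y, (S⁻¹ * Q * S).submatrix e e = fromBlocks X 0 0 Y :=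
      ⟨_, _, (exchangeMatrix_conj_eq_self_iff n Q).mp hQ⟩
    have hexpG : exp (S⁻¹ * Q * S) = F := by rw [Matrix.exp_conj' _ _ hS, hexpQ]
    obtain ⟨h1, -, -, h2⟩ :=
      fromBlocks_inj.mp (hFe.symm.trans (hexpG ▸ exp_submatrix_of_submatrix_eq_fromBlocks e hGe))
    exact ⟨⟨X, h1.symm⟩, ⟨Y, h2.symm⟩⟩
  · rintro ⟨⟨L1, hL1⟩, ⟨L2, hL2⟩⟩
    set G := (fromBlocks L1 0 0 L2).submatrix e.symm e.symm
    have hGe : G.submatrix e e = fromBlocks L1 0 0 L2 := by simp [G]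
    have hexpG : exp G = F := (reindex e.symm e.symm).injective <| by
      simp only [reindex_apply, Equiv.symm_symm, exp_submatrix_of_submatrix_eq_fromBlocks e hGe,
        hL1, hL2, hFe]
    have hG : S⁻¹ * (S * G * S⁻¹) * S = G := by simp [Matrix.mul_assoc]
    refine ⟨S * G * S⁻¹, (exchangeMatrix_conj_eq_self_iff n _).mpr ?_, ?_⟩
    · rw [hG, hGe, toBlocks_fromBlocks₁₁, toBlocks_fromBlocks₂₂]
    · rw [Matrix.exp_conj _ _ hS, hexpG, show F = S⁻¹ * A * S from rfl]
      simp [Matrix.mul_assoc]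
end
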